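/- Let r' : {(x,y) : x > 0} × ℝ → ℝ³ be defined by r'(x,y) = ( (1/√3)(e^y/sinh(√3 x))(sinh²(√3 x) + 3y), −(1/√3) e^{−2y} coth(√3 x), −(1/√3) e^y / sinh(√3 x) ), viewed as taking values in ℂ³. Then for all x > 0, y ∈ ℝ, the complex 3×3 determinant satisfies |det[ ∂ₓr' − i ∂ᵧr', ∂ₓₓr' − ∂ᵧᵧr' − 2i ∂ₓᵧr', r' ]| = 8. -/

import Mathlib

/-- Real hyperbolic cotangent. -/
noncomputable def coth (x : ℝ) : ℝ := Real.cosh x / Real.sinh x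

/-- The isothermal parametrization of Hildebrand's case-1 affine sphere. -/
noncomputable def r' (x y : ℝ) : Fin 3 → ℝ :=
  ![ (1 / Real.sqrt 3) * (Real.exp y / Real.sinh (Real.sqrt 3 * x)) *
       ((Real.sinh (Real.sqrt 3 * x)) ^ 2 + 3 * y),
     -(1 / Real.sqrt 3) * Real.exp (-2 * y) * coth (Real.sqrt 3 * x),
     -(1 / Real.sqrt 3) * Real.exp y / Real.sinh (Real.sqrt 3 * x) ]

/-- `∂ₓ r'`. -/
noncomputable def rx' (x y : ℝ) : Fin 3 → ℝ := fun i => deriv (fun s => r' s y i) x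
/-- `∂ᵧ r'`. -/
noncomputable def ry' (x y : ℝ) : Fin 3 → ℝ := fun i => deriv (fun s => r' x s i) y
/-- `∂ₓₓ r'`. -/
noncomputable def rxx' (x y : ℝ) : Fin 3 → ℝ := fun i => deriv (fun s => rx' s y i) x
/-- `∂ₓᵧ r'`. -/
noncomputable def rxy' (x y : ℝ) : Fin 3 → ℝ := fun i => deriv (fun s => rx' x s i) y
/-- `∂ᵧᵧ r'`. -/
noncomputable def ryy' (x y : ℝ) : Fin 3 → ℝ := fun i => deriv (fun s => ry' x s i) y

/-!
The parametrization is an orbit of a one-parameter subgroup of `SL(3, ℝ)`: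
`r' x y = exp (y N) γ(x)` with `N = orbitGenerator` and `γ = profile = r' · 0` (for `x > 0`).
Hence the partial derivatives of `r'` at `(x, y)` are `exp (y N)` applied to `γ'`, `N γ`, `γ''`,
`N² γ`, `N γ'` and `γ`, and since `det (exp (y N)) = 1` the cubic-form determinant equals its
value at `y = 0`. There it is a rational function of `sinh (√3 x)` and `cosh (√3 x)` that
reduces to `-8` by `cosh² = sinh² + 1`.
-/

open Matrix Real
open Complex (I ofReal)

lemma sinh_sqrt_three_mul_ne_zero {x : ℝ} (hx : 0 < x) : sinh (√3 * x) ≠ 0 :=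
  (sinh_pos_iff.2 (by positivity)).ne'

section PiDeriv

variable {𝕜 : Type*} [NontriviallyNormedField 𝕜]

lemma hasDerivAt_vec₃ {f g h : 𝕜 → 𝕜} {f' g' h' x : 𝕜} (hf : HasDerivAt f f' x)
    (hg : HasDerivAt g g' x) (hh : HasDerivAt h h' x) :
    HasDerivAt (fun s => ![f s, g s, h s]) ![f', g', h'] x :=
  hasDerivAt_pi.2 fun i => by fin_cases i <;> assumption

lemma HasDerivAt.const_mulVec {m n : Type*} [Fintype m] [Fintype n] {F : 𝕜 → n → 𝕜}
    {F' : n → 𝕜} {x : 𝕜} (A : Matrix m n 𝕜) (h : HasDerivAt F F' x) :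
    HasDerivAt (fun s => A *ᵥ F s) (A *ᵥ F') x :=
  hasDerivAt_pi.2 fun i =>
    HasDerivAt.fun_sum fun j _ => (hasDerivAt_pi.1 h j).const_mul (A i j)

lemma deriv_apply_of_hasDerivAt {n : Type*} [Fintype n] {F : 𝕜 → n → 𝕜} {F' : n → 𝕜} {x : 𝕜}
    (h : HasDerivAt F F' x) : (fun i => deriv (fun s => F s i) x) = F' :=
  funext fun i => (hasDerivAt_pi.1 h i).deriv

end PiDeriv

lemma det_of_mulVec₃ {R : Type*} [CommRing R] (A : Matrix (Fin 3) (Fin 3) R)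
    (a b c : Fin 3 → R) :
    det (of ![A *ᵥ a, A *ᵥ b, A *ᵥ c]) = det A * det (of ![a, b, c]) := by
  have h : of ![A *ᵥ a, A *ᵥ b, A *ᵥ c] = of ![a, b, c] * Aᵀ := by
    ext k j
    fin_cases k <;> simp [mul_apply, mulVec, dotProduct, mul_comm]
  rw [h, det_mul, det_transpose, mul_comm]

noncomputable def cubicDet (rx ry rxx ryy rxy r : Fin 3 → ℝ) : ℂ :=
  det (of ![ofReal ∘ rx - I • ofReal ∘ ry, ofReal ∘ rxx - ofReal ∘ ryy - (2 * I) • ofReal ∘ rxy,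
    ofReal ∘ r])

lemma Complex.ofReal_comp_mulVec {m n : Type*} [Fintype n] (A : Matrix m n ℝ) (v : n → ℝ) :
    ofReal ∘ (A *ᵥ v) = A.map ofReal *ᵥ ofReal ∘ v :=
  funext (RingHom.map_mulVec Complex.ofRealHom A v)

lemma cubicDet_mulVec (A : Matrix (Fin 3) (Fin 3) ℝ) (rx ry rxx ryy rxy r : Fin 3 → ℝ) :
    cubicDet (A *ᵥ rx) (A *ᵥ ry) (A *ᵥ rxx) (A *ᵥ ryy) (A *ᵥ rxy) (A *ᵥ r) =
      A.det * cubicDet rx ry rxx ryy rxy r := by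
  simp only [cubicDet, Complex.ofReal_comp_mulVec, ← mulVec_smul, ← mulVec_sub, det_of_mulVec₃]
  rw [← Complex.ofRealHom_eq_coe, RingHom.map_det]
  rfl

def orbitGenerator : Matrix (Fin 3) (Fin 3) ℝ := !![1, 0, -3; 0, -2, 0; 0, 0, 1]

/-- `exp (t • orbitGenerator)`. -/
noncomputable def orbitMatrix (t : ℝ) : Matrix (Fin 3) (Fin 3) ℝ :=
  !![exp t, 0, -3 * t * exp t; 0, exp (-2 * t), 0; 0, 0, exp t]

lemma det_orbitMatrix (t : ℝ) : (orbitMatrix t).det = 1 := by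
  have h : exp t * exp (-2 * t) * exp t = 1 := by
    rw [← exp_add, ← exp_add, show t + -2 * t + t = 0 by ring, exp_zero]
  simpa [orbitMatrix, det_fin_three] using h

lemma orbitGenerator_mulVec (v : Fin 3 → ℝ) :
    orbitGenerator *ᵥ v = ![v 0 - 3 * v 2, -2 * v 1, v 2] := by
  ext i
  fin_cases i <;> simp [orbitGenerator, mulVec, dotProduct, Fin.sum_univ_three, sub_eq_add_neg]

lemma orbitMatrix_mulVec (t : ℝ) (v : Fin 3 → ℝ) :
    orbitMatrix t *ᵥ v =
      ![exp t * v 0 - 3 * t * exp t * v 2, exp (-2 * t) * v 1, exp t * v 2] := by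
  ext i
  fin_cases i <;> simp [orbitMatrix, mulVec, dotProduct, Fin.sum_univ_three, sub_eq_add_neg]

lemma hasDerivAt_orbitMatrix_mulVec (v : Fin 3 → ℝ) (t : ℝ) :
    HasDerivAt (fun t => orbitMatrix t *ᵥ v) (orbitMatrix t *ᵥ (orbitGenerator *ᵥ v)) t := by
  simp only [orbitMatrix_mulVec, orbitGenerator_mulVec, cons_val]
  refine hasDerivAt_vec₃ ?_ ?_ ?_
  · exact (((Real.hasDerivAt_exp t).mul_const (v 0)).sub ((((hasDerivAt_id' t).const_mul 3).mul
      (Real.hasDerivAt_exp t)).mul_const (v 2))).congr_deriv (by ring)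
  · exact (((hasDerivAt_id' t).const_mul (-2)).exp.mul_const (v 1)).congr_deriv (by ring)
  · exact (Real.hasDerivAt_exp t).mul_const (v 2)

noncomputable def profile (x : ℝ) : Fin 3 → ℝ :=
  ![sinh (√3 * x) / √3, -cosh (√3 * x) / (√3 * sinh (√3 * x)), -1 / (√3 * sinh (√3 * x))]

noncomputable def profileVelocity (x : ℝ) : Fin 3 → ℝ :=
  ![cosh (√3 * x), 1 / sinh (√3 * x) ^ 2, cosh (√3 * x) / sinh (√3 * x) ^ 2]

noncomputable def profileAcceleration (x : ℝ) : Fin 3 → ℝ :=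
  ![√3 * sinh (√3 * x), -2 * √3 * cosh (√3 * x) / sinh (√3 * x) ^ 3,
    √3 * (sinh (√3 * x) ^ 2 - 2 * cosh (√3 * x) ^ 2) / sinh (√3 * x) ^ 3]

lemma hasDerivAt_profile {x : ℝ} (hx : 0 < x) : HasDerivAt profile (profileVelocity x) x := by
  have hs := sinh_sqrt_three_mul_ne_zero hx
  have hS := ((hasDerivAt_id' x).const_mul √3).sinh
  have hC := ((hasDerivAt_id' x).const_mul √3).cosh
  have hne : √3 * sinh (√3 * x) ≠ 0 := by positivity
  apply hasDerivAt_vec₃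
  · exact (hS.div_const √3).congr_deriv (by field_simp)
  · refine (hC.fun_neg.div (hS.const_mul √3) hne).congr_deriv ?_
    field_simp
    linear_combination cosh_sq (√3 * x)
  · refine ((hasDerivAt_const x (-1 : ℝ)).div (hS.const_mul √3) hne).congr_deriv ?_
    field_simp
    ring

lemma hasDerivAt_profileVelocity {x : ℝ} (hx : 0 < x) :
    HasDerivAt profileVelocity (profileAcceleration x) x := by
  have hs := pow_ne_zero 2 (sinh_sqrt_three_mul_ne_zero hx)
  have hS := ((hasDerivAt_id' x).const_mul √3).sinh
  have hC := ((hasDerivAt_id' x).const_mul √3).cosh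
  apply hasDerivAt_vec₃
  · exact hC.congr_deriv (by ring)
  · refine ((hasDerivAt_const x (1 : ℝ)).div (hS.fun_pow 2) hs).congr_deriv ?_
    field_simp
    ring
  · refine (hC.div (hS.fun_pow 2) hs).congr_deriv ?_
    field_simp
    ring

lemma r'_eq_orbitMatrix_mulVec_profile {x : ℝ} (hx : 0 < x) (y : ℝ) :
    r' x y = orbitMatrix y *ᵥ profile x := by
  have hs := sinh_sqrt_three_mul_ne_zero hx
  simp only [r', orbitMatrix_mulVec, profile, coth, cons_val, vecCons_inj, and_true]
  refine ⟨?_, ?_, ?_⟩ <;> field_simp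
  ring

lemma rx'_eq_orbitMatrix_mulVec {x : ℝ} (hx : 0 < x) (y : ℝ) :
    rx' x y = orbitMatrix y *ᵥ profileVelocity x := by
  refine deriv_apply_of_hasDerivAt
    (((hasDerivAt_profile hx).const_mulVec _).congr_of_eventuallyEq ?_)
  filter_upwards [Ioi_mem_nhds hx] with s hs using r'_eq_orbitMatrix_mulVec_profile hs y

lemma ry'_eq_orbitMatrix_mulVec {x : ℝ} (hx : 0 < x) (y : ℝ) :
    ry' x y = orbitMatrix y *ᵥ (orbitGenerator *ᵥ profile x) := by
  unfold ry'
  simp_rw [r'_eq_orbitMatrix_mulVec_profile hx]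
  exact deriv_apply_of_hasDerivAt (hasDerivAt_orbitMatrix_mulVec _ y)

lemma rxx'_eq_orbitMatrix_mulVec {x : ℝ} (hx : 0 < x) (y : ℝ) :
    rxx' x y = orbitMatrix y *ᵥ profileAcceleration x := by
  refine deriv_apply_of_hasDerivAt
    (((hasDerivAt_profileVelocity hx).const_mulVec _).congr_of_eventuallyEq ?_)
  filter_upwards [Ioi_mem_nhds hx] with s hs using rx'_eq_orbitMatrix_mulVec hs y

lemma rxy'_eq_orbitMatrix_mulVec {x : ℝ} (hx : 0 < x) (y : ℝ) :
    rxy' x y = orbitMatrix y *ᵥ (orbitGenerator *ᵥ profileVelocity x) := by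
  unfold rxy'
  simp_rw [rx'_eq_orbitMatrix_mulVec hx]
  exact deriv_apply_of_hasDerivAt (hasDerivAt_orbitMatrix_mulVec _ y)

lemma ryy'_eq_orbitMatrix_mulVec {x : ℝ} (hx : 0 < x) (y : ℝ) :
    ryy' x y = orbitMatrix y *ᵥ (orbitGenerator *ᵥ (orbitGenerator *ᵥ profile x)) := by
  unfold ryy'
  simp_rw [ry'_eq_orbitMatrix_mulVec hx]
  exact deriv_apply_of_hasDerivAt (hasDerivAt_orbitMatrix_mulVec _ y)

lemma cubicDet_profile {x : ℝ} (hx : 0 < x) :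
    cubicDet (profileVelocity x) (orbitGenerator *ᵥ profile x) (profileAcceleration x)
      (orbitGenerator *ᵥ (orbitGenerator *ᵥ profile x)) (orbitGenerator *ᵥ profileVelocity x)
      (profile x) = -8 := by
  have hs := sinh_sqrt_three_mul_ne_zero hx
  have hc := cosh_sq (√3 * x)
  have h3 : √3 ^ 2 = (3 : ℝ) := sq_sqrt (by norm_num)
  have ht : √3 ≠ (0 : ℝ) := by positivity
  simp only [cubicDet, orbitGenerator_mulVec, profile, profileVelocity, profileAcceleration]
  generalize sinh (√3 * x) = s at hs hc ⊢
  generalize cosh (√3 * x) = c at hc ⊢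
  generalize √3 = t at h3 ht ⊢
  simp only [det_fin_three, of_apply, cons_val, Pi.sub_apply, Pi.smul_apply, Function.comp_apply,
    smul_eq_mul]
  push_cast
  have hs' : (s : ℂ) ≠ 0 := Complex.ofReal_ne_zero.2 hs
  have ht' : (t : ℂ) ≠ 0 := Complex.ofReal_ne_zero.2 ht
  have hc' : (c : ℂ) ^ 2 = s ^ 2 + 1 := by exact_mod_cast hc
  have h3' : (t : ℂ) ^ 2 = 3 := by exact_mod_cast h3
  field_simp
  -- the coefficients are the quotients of the successive reductions modulo
  -- `I ^ 2 + 1`, `c ^ 2 - s ^ 2 - 1` and `t ^ 2 - 3`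
  linear_combination 12 * s * t * (1 - c ^ 2 + c ^ 2 * s ^ 2) * Complex.I_sq
    + 2 * s * t * (9 - 9 * s ^ 2 - s ^ 2 * t ^ 2 + 3 * c * s * t * I - c ^ 2 * t ^ 2) * hc'
    + 3 * s ^ 2 * (2 * s ^ 3 * t - 3 * c * I) * h3'

/-- The cubic-form determinant `det[r'_x − i r'_y, r'_{xx} − r'_{yy} − 2i r'_{xy}, r']`
has modulus `8` (that is, `|U| = 1`). -/
theorem cubic_form_modulus_case1 :
    ∀ x : ℝ, 0 < x → ∀ y : ℝ,
      ‖(Matrix.det (Matrix.of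
          ![fun i => (rx' x y i : ℂ) - Complex.I * (ry' x y i : ℂ),
            fun i => ((rxx' x y i : ℂ) - (ryy' x y i : ℂ)) - 2 * Complex.I * (rxy' x y i : ℂ),
            fun i => (r' x y i : ℂ)]))‖ = 8 := by
  intro x hx y
  change ‖cubicDet (rx' x y) (ry' x y) (rxx' x y) (ryy' x y) (rxy' x y) (r' x y)‖ = 8
  rw [rx'_eq_orbitMatrix_mulVec hx, ry'_eq_orbitMatrix_mulVec hx, rxx'_eq_orbitMatrix_mulVec hx,
    ryy'_eq_orbitMatrix_mulVec hx, rxy'_eq_orbitMatrix_mulVec hx,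
    r'_eq_orbitMatrix_mulVec_profile hx, cubicDet_mulVec, det_orbitMatrix, cubicDet_profile hx]
  norm_num
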